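/- arXiv:2107.01509 — 3 statements merged into one kernel-verified Lean document; each statement's English description precedes it below -/
import Mathlib

section
/- Coupled transport form of total variation: let P and P' be joint distributions of a pair of random variables (X,Y) with coinciding marginals in the first variable, P(X) = P'(X). Then there exists a probability distribution Q over triples (X,Y,Y') whose marginals satisfy Q(X,Y) = P(X,Y) and Q(X,Y') = P'(X,Y), and for which Q[Y ≠ Y'] = TV(P(X,Y) ∥ P'(X,Y)). -/
open MeasureTheory ProbabilityTheory

noncomputable section

/-- Total variation distance between two measures: supremum over measurable events of the
difference of probabilities. -/
def TV {Ω : Type*} [MeasurableSpace Ω] (P Q : Measure Ω) : ℝ :=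
  ⨆ s : {s : Set Ω // MeasurableSet s}, |(P s.1).toReal - (Q s.1).toReal|

/-!
Let `f`, `f'` be the densities of `P`, `P'` with respect to `P + P'`. The common part `m` with
density `min f f'` splits `P = m + r` and `P' = m + r'` with `r ⟂ₘ r'`, so
`|P s - P' s| = |r s - r' s| ≤ r univ`, with equality on a set separating `r` from `r'`: hence
`TV P P' = r univ`. The coupling puts `Y = Y'` on `m` and couples the residuals `r`, `r'` (which
have the same `X`-marginal) conditionally independently given `X`; since `r ⟂ₘ r'`, this residual
coupling gives no mass to `Y = Y'`, so `Y ≠ Y'` has probability exactly `r univ`.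
-/

open Set

namespace MeasureTheory.Measure

variable {Ω : Type*} [MeasurableSpace Ω]

theorem exists_eq_add_add_mutuallySingular (P P' : Measure Ω) [IsFiniteMeasure P]
    [IsFiniteMeasure P'] : ∃ m r r' : Measure Ω, P = m + r ∧ P' = m + r' ∧ r ⟂ₘ r' := by
  set ν := P + P'
  set f := P.rnDeriv ν
  set f' := P'.rnDeriv ν
  have hf : Measurable f := measurable_rnDeriv _ _
  have hf' : Measurable f' := measurable_rnDeriv _ _
  have hP : ν.withDensity f = P :=
    withDensity_rnDeriv_eq _ _ (absolutelyContinuous_of_le (Measure.le_add_right le_rfl))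
  have hP' : ν.withDensity f' = P' :=
    withDensity_rnDeriv_eq _ _ (absolutelyContinuous_of_le (Measure.le_add_left le_rfl))
  refine ⟨ν.withDensity fun ω => min (f ω) (f' ω), ν.withDensity (f - f'),
    ν.withDensity (f' - f), ?_, ?_, ⟨{ω | f ω ≤ f' ω}, measurableSet_le hf hf', ?_, ?_⟩⟩
  · rw [← withDensity_add_left (hf.min hf'), ← hP]
    congr 1
    funext ω
    rw [Pi.add_apply, add_comm, Pi.sub_apply, tsub_add_min]
  · rw [← withDensity_add_left (hf.min hf'), ← hP']
    congr 1
    funext ω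
    rw [Pi.add_apply, add_comm, Pi.sub_apply, min_comm, tsub_add_min]
  · rw [withDensity_apply_eq_zero (hf.sub hf')]
    exact measure_mono_null (fun ω ⟨hne, hle⟩ => hne (tsub_eq_zero_of_le hle)) measure_empty
  · rw [withDensity_apply_eq_zero (hf'.sub hf)]
    exact measure_mono_null (fun ω ⟨hne, hnle⟩ => hne (tsub_eq_zero_of_le (le_of_not_ge hnle)))
      measure_empty

end MeasureTheory.Measure

theorem TV_add_of_mutuallySingular {Ω : Type*} [MeasurableSpace Ω] (m r r' : Measure Ω)
    [IsFiniteMeasure m] [IsFiniteMeasure r] [IsFiniteMeasure r'] (hrr' : r ⟂ₘ r')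
    (huniv : r univ = r' univ) :
    TV (m + r) (m + r') = (r univ).toReal := by
  obtain ⟨S, hS, hrS, hr'S⟩ := hrr'
  have hsub : ∀ s, ((m + r) s).toReal - ((m + r') s).toReal = (r s).toReal - (r' s).toReal := by
    intro s
    simp only [Measure.add_apply, ENNReal.toReal_add (measure_ne_top _ _) (measure_ne_top _ _)]
    ring
  have hle : ∀ (μ : Measure Ω) [IsFiniteMeasure μ] (s : Set Ω), (μ s).toReal ≤ (μ univ).toReal :=
    fun μ _ s => ENNReal.toReal_mono (measure_ne_top _ _) (measure_mono (subset_univ s))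
  refine IsGreatest.csSup_eq ⟨⟨⟨Sᶜ, hS.compl⟩, ?_⟩, ?_⟩
  · dsimp only
    rw [hsub, measure_compl hS (measure_ne_top _ _), hrS, hr'S, tsub_zero]
    simp
  · rintro _ ⟨s, rfl⟩
    dsimp only
    rw [hsub]
    exact abs_sub_le_of_nonneg_of_le ENNReal.toReal_nonneg (hle r s) ENNReal.toReal_nonneg
      (huniv ▸ hle r' s)

section Coupling

variable {α β : Type*} [MeasurableSpace α] [MeasurableSpace β]

theorem exists_coupling_of_fst_eq [StandardBorelSpace β] [Nonempty β] (r r' : Measure (α × β))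
    [IsFiniteMeasure r] [IsFiniteMeasure r'] (hfst : r.fst = r'.fst) :
    ∃ C : Measure (α × β × β),
      C.map (fun p => (p.1, p.2.1)) = r ∧ C.map (fun p => (p.1, p.2.2)) = r' := by
  refine ⟨r.fst ⊗ₘ (r.condKernel ×ₖ r'.condKernel), ?_, ?_⟩
  · change Measure.map (Prod.map id Prod.fst) _ = r
    rw [← Measure.compProd_map measurable_fst, ← Kernel.fst_eq, Kernel.fst_prod,
      r.disintegrate r.condKernel]
  · change Measure.map (Prod.map id Prod.snd) _ = r'
    rw [← Measure.compProd_map measurable_snd, ← Kernel.snd_eq, Kernel.snd_prod, hfst,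
      r'.disintegrate r'.condKernel]

theorem measure_setOf_eq_eq_zero_of_mutuallySingular {r r' : Measure (α × β)} (hrr' : r ⟂ₘ r')
    {C : Measure (α × β × β)} (hC : C.map (fun p => (p.1, p.2.1)) = r)
    (hC' : C.map (fun p => (p.1, p.2.2)) = r') :
    C {p | p.2.1 = p.2.2} = 0 := by
  obtain ⟨S, hS, hrS, hr'S⟩ := hrr'
  have hcover : {p : α × β × β | p.2.1 = p.2.2} ⊆
      (fun p => (p.1, p.2.1)) ⁻¹' S ∪ (fun p => (p.1, p.2.2)) ⁻¹' Sᶜ := by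
    intro p hp
    by_cases h : (p.1, p.2.1) ∈ S
    · exact Or.inl h
    · exact Or.inr (show (p.1, p.2.2) ∉ S from (hp : p.2.1 = p.2.2) ▸ h)
  refine measure_mono_null hcover (measure_union_null ?_ ?_)
  · rwa [← Measure.map_apply (by fun_prop) hS, hC]
  · rwa [← Measure.map_apply (by fun_prop) hS.compl, hC']

theorem exists_coupling_add_of_mutuallySingular [StandardBorelSpace β] [Nonempty β]
    (m r r' : Measure (α × β)) [IsFiniteMeasure r] [IsFiniteMeasure r']
    (hfst : r.fst = r'.fst) (hrr' : r ⟂ₘ r') :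
    ∃ Q : Measure (α × β × β), Q.map (fun p => (p.1, p.2.1)) = m + r ∧
      Q.map (fun p => (p.1, p.2.2)) = m + r' ∧ Q {p | p.2.1 ≠ p.2.2} = r univ := by
  obtain ⟨C, hC, hC'⟩ := exists_coupling_of_fst_eq r r' hfst
  have hδ : Measurable fun p : α × β => (p.1, p.2, p.2) := by fun_prop
  refine ⟨m.map (fun p => (p.1, p.2, p.2)) + C, ?_, ?_, ?_⟩
  · rw [Measure.map_add _ _ (by fun_prop), Measure.map_map (by fun_prop) hδ, hC]
    exact congrArg (· + r) Measure.map_id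
  · rw [Measure.map_add _ _ (by fun_prop), Measure.map_map (by fun_prop) hδ, hC']
    exact congrArg (· + r') Measure.map_id
  · have hdiag : MeasurableSet {p : α × β × β | p.2.1 = p.2.2} :=
      measurableSet_eq_fun (by fun_prop) (by fun_prop)
    have hoff : {p : α × β × β | p.2.1 ≠ p.2.2} = univ \ {p | p.2.1 = p.2.2} := by
      ext; simp
    have hδ_off : (fun p : α × β => (p.1, p.2, p.2)) ⁻¹' (univ \ {p | p.2.1 = p.2.2}) = ∅ := by
      ext; simp
    rw [hoff, Measure.add_apply, Measure.map_apply hδ (MeasurableSet.univ.diff hdiag), hδ_off,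
      measure_empty, zero_add,
      measure_sdiff_null (measure_setOf_eq_eq_zero_of_mutuallySingular hrr' hC hC'), ← hC,
      Measure.map_apply (by fun_prop) .univ, preimage_univ]

end Coupling

theorem stmt3_general {α β : Type*} [MeasurableSpace α] [MeasurableSpace β]
    [StandardBorelSpace β] [Nonempty β]
    (P P' : Measure (α × β)) [IsProbabilityMeasure P] [IsProbabilityMeasure P']
    (hmarg : P.map Prod.fst = P'.map Prod.fst) :
    ∃ Q : Measure (α × β × β), IsProbabilityMeasure Q ∧
      Q.map (fun p => (p.1, p.2.1)) = P ∧
      Q.map (fun p => (p.1, p.2.2)) = P' ∧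
      (Q {p | p.2.1 ≠ p.2.2}).toReal = TV P P' := by
  obtain ⟨m, r, r', rfl, rfl, hrr'⟩ := Measure.exists_eq_add_add_mutuallySingular P P'
  have : IsFiniteMeasure m := isFiniteMeasure_of_le (m + r) (Measure.le_add_right le_rfl)
  have : IsFiniteMeasure r := isFiniteMeasure_of_le (m + r) (Measure.le_add_left le_rfl)
  have : IsFiniteMeasure r' := isFiniteMeasure_of_le (m + r') (Measure.le_add_left le_rfl)
  have hfst : r.fst = r'.fst := by
    have h : m.fst + r.fst = m.fst + r'.fst := by
      rw [← Measure.fst_add, ← Measure.fst_add]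
      exact hmarg
    exact le_antisymm (Measure.le_of_add_le_add_left h.le) (Measure.le_of_add_le_add_left h.ge)
  obtain ⟨Q, hQ, hQ', hoff⟩ := exists_coupling_add_of_mutuallySingular m r r' hfst hrr'
  have : IsProbabilityMeasure (Q.map fun p => (p.1, p.2.1)) := hQ ▸ inferInstance
  refine ⟨Q, Measure.isProbabilityMeasure_of_map fun p => (p.1, p.2.1), hQ, hQ', ?_⟩
  rw [hoff, TV_add_of_mutuallySingular m r r' hrr'
    (by rw [← Measure.fst_univ, hfst, Measure.fst_univ])]

theorem stmt3 {α β : Type*} [MeasurableSpace α] [MeasurableSpace β]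
    [StandardBorelSpace α] [StandardBorelSpace β] [Nonempty β]
    (P P' : Measure (α × β)) [IsProbabilityMeasure P] [IsProbabilityMeasure P']
    (hmarg : P.map Prod.fst = P'.map Prod.fst) :
    ∃ Q : Measure (α × β × β), IsProbabilityMeasure Q ∧
      Q.map (fun p => (p.1, p.2.1)) = P ∧
      Q.map (fun p => (p.1, p.2.2)) = P' ∧
      (Q {p | p.2.1 ≠ p.2.2}).toReal = TV P P' :=
  stmt3_general P P' hmarg
end
end

section
/- For any k ∈ ℕ and any measurable functions f_1,…,f_H : ℝ^{𝒜×k} → Δ(𝒜) (probability distributions over actions), the family of Bayesian bandit algorithms (k,f_{1:H})-PosteriorSample(·) is k-Monte Carlo. -/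
/-!
Say that `P` is `ε`-dominated by `Q` when `P s ≤ Q s + ε` for every measurable `s`; a total
variation bound `t` is `ofReal t`-domination in both directions. Domination passes, by the layer
cake formula, to integrals of measurable functions with values in `[0, 1]`, hence through any
probability kernel, and, changing one factor at a time, from `P, Q` to the `k`-fold products with
`ε` replaced by `k ε`. The action law of `PosteriorSample` is the `k`-fold product of the
posterior pushed through the kernel `f h`.
-/

open MeasureTheory ProbabilityTheory

noncomputable section

/-- Bandit trajectories of length `h`: the sequence of actions and observed scalar rewards. -/
abbrev Traj (𝒜 : Type*) (h : ℕ) : Type _ := Fin h → 𝒜 × ℝ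

/-- The `n`-Monte Carlo property: for any two parameters, any step and any partial trajectory,
the total variation between the action distributions is at most `n` times the total variation
between the posteriors. -/
def IsMonteCarlo {Θ 𝒜 : Type*} [MeasurableSpace 𝒜]
    (alg : Θ → (h : ℕ) → Kernel (Traj 𝒜 h) 𝒜)
    (post : Θ → (h : ℕ) → Kernel (Traj 𝒜 h) (𝒜 → ℝ)) (n : ℝ) : Prop :=
  ∀ θ θ' (h : ℕ) (τ : Traj 𝒜 h),
    TV ((alg θ h) τ) ((alg θ' h) τ) ≤ n * TV ((post θ h) τ) ((post θ' h) τ)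


open scoped ENNReal

section TotalVariation

variable {Ω : Type*} [MeasurableSpace Ω] (P Q : Measure Ω)

lemma TV_comm : TV P Q = TV Q P := by
  simp only [TV, abs_sub_comm]

lemma TV_nonneg : 0 ≤ TV P Q :=
  Real.iSup_nonneg fun _ => abs_nonneg _

variable [IsFiniteMeasure P] [IsFiniteMeasure Q]

lemma abs_sub_le_TV {s : Set Ω} (hs : MeasurableSet s) :
    |(P s).toReal - (Q s).toReal| ≤ TV P Q := by
  refine le_ciSup (f := fun s : {s : Set Ω // MeasurableSet s} =>
    |(P s.1).toReal - (Q s.1).toReal|) ⟨(P .univ).toReal + (Q .univ).toReal, ?_⟩ ⟨s, hs⟩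
  rintro _ ⟨t, rfl⟩
  have hPt : (P t.1).toReal ≤ (P .univ).toReal :=
    ENNReal.toReal_mono (measure_ne_top P _) (measure_mono (Set.subset_univ _))
  have hQt : (Q t.1).toReal ≤ (Q .univ).toReal :=
    ENNReal.toReal_mono (measure_ne_top Q _) (measure_mono (Set.subset_univ _))
  rw [abs_sub_le_iff]
  constructor <;>
    linarith [ENNReal.toReal_nonneg (a := P t.1), ENNReal.toReal_nonneg (a := Q t.1)]

lemma measure_le_add_ofReal_TV {s : Set Ω} (hs : MeasurableSet s) :
    P s ≤ Q s + ENNReal.ofReal (TV P Q) := by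
  rw [← ENNReal.toReal_le_toReal (measure_ne_top P s)
    (ENNReal.add_ne_top.mpr ⟨measure_ne_top Q s, ENNReal.ofReal_ne_top⟩),
    ENNReal.toReal_add (measure_ne_top Q s) ENNReal.ofReal_ne_top,
    ENNReal.toReal_ofReal (TV_nonneg P Q)]
  linarith [le_abs_self ((P s).toReal - (Q s).toReal), abs_sub_le_TV P Q hs]

lemma TV_le_of_forall_le_add {t : ℝ} (ht : 0 ≤ t)
    (hPQ : ∀ s, MeasurableSet s → P s ≤ Q s + ENNReal.ofReal t)
    (hQP : ∀ s, MeasurableSet s → Q s ≤ P s + ENNReal.ofReal t) :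
    TV P Q ≤ t := by
  have : Nonempty {s : Set Ω // MeasurableSet s} := ⟨⟨∅, .empty⟩⟩
  refine ciSup_le fun ⟨s, hs⟩ => abs_sub_le_iff.mpr ⟨?_, ?_⟩
  · have := ENNReal.toReal_le_add (hPQ s hs) (measure_ne_top Q s) ENNReal.ofReal_ne_top
    rw [ENNReal.toReal_ofReal ht] at this
    linarith
  · have := ENNReal.toReal_le_add (hQP s hs) (measure_ne_top P s) ENNReal.ofReal_ne_top
    rw [ENNReal.toReal_ofReal ht] at this
    linarith

end TotalVariation

namespace MeasureTheory

variable {α β : Type*} [MeasurableSpace α] [MeasurableSpace β] {μ ν : Measure α}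
  {ε : ℝ≥0∞}

lemma lintegral_le_add_of_forall_le_add (hμν : ∀ s, MeasurableSet s → μ s ≤ ν s + ε)
    {g : α → ℝ≥0∞} (hg : Measurable g) (hg_le_one : ∀ x, g x ≤ 1) :
    ∫⁻ x, g x ∂μ ≤ ∫⁻ x, g x ∂ν + ε := by
  set g' : α → ℝ := fun x => (g x).toReal
  have hg' : Measurable g' := hg.ennreal_toReal
  have hg'_le_one (x : α) : g' x ≤ 1 :=
    ENNReal.toReal_le_of_le_ofReal zero_le_one (ENNReal.ofReal_one ▸ hg_le_one x)
  have layerCake (ρ : Measure α) :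
      ∫⁻ x, g x ∂ρ = ∫⁻ t in Set.Ioi 0, ρ {x | t < g' x} := by
    rw [← lintegral_eq_lintegral_meas_lt ρ (.of_forall fun _ => ENNReal.toReal_nonneg)
      hg'.aemeasurable]
    congr with x
    exact (ENNReal.ofReal_toReal (ne_top_of_le_ne_top ENNReal.one_ne_top (hg_le_one x))).symm
  have hsupport : (fun t => μ {x | t < g' x}).support ⊆ Set.Iio 1 := by
    intro t ht
    by_contra h
    rw [Set.mem_Iio, not_lt] at h
    refine ht (measure_mono_null (fun x hx => ?_) measure_empty)
    exact absurd ((hg'_le_one x).trans h) (not_le.mpr hx)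
  calc ∫⁻ x, g x ∂μ = ∫⁻ t in Set.Ioo 0 1, μ {x | t < g' x} := by
        rw [layerCake, ← setLIntegral_eq_of_support_subset hsupport,
          Measure.restrict_restrict measurableSet_Iio, Set.inter_comm, Set.Ioi_inter_Iio]
    _ ≤ ∫⁻ t in Set.Ioo 0 1, (ν {x | t < g' x} + ε) :=
        lintegral_mono fun t => hμν _ (measurableSet_lt measurable_const hg')
    _ = (∫⁻ t in Set.Ioo 0 1, ν {x | t < g' x}) + ε := by
        rw [lintegral_add_right _ measurable_const, setLIntegral_const, Real.volume_Ioo]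
        simp
    _ ≤ ∫⁻ x, g x ∂ν + ε := by
        rw [layerCake]
        gcongr
        exact Set.Ioo_subset_Ioi_self

lemma Measure.bind_apply_le_add (hμν : ∀ s, MeasurableSet s → μ s ≤ ν s + ε)
    {κ : α → Measure β} (hκ : Measurable κ) [∀ a, IsZeroOrProbabilityMeasure (κ a)]
    {s : Set β} (hs : MeasurableSet s) :
    μ.bind κ s ≤ ν.bind κ s + ε := by
  rw [Measure.bind_apply hs hκ.aemeasurable, Measure.bind_apply hs hκ.aemeasurable]
  exact lintegral_le_add_of_forall_le_add hμν (Measure.measurable_coe hs |>.comp hκ)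
    fun _ => prob_le_one

lemma Measure.pi_apply_le_add [IsProbabilityMeasure μ] [IsProbabilityMeasure ν]
    (hμν : ∀ s, MeasurableSet s → μ s ≤ ν s + ε) (n : ℕ)
    {s : Set (Fin n → α)} (hs : MeasurableSet s) :
    Measure.pi (fun _ => μ) s ≤ Measure.pi (fun _ => ν) s + n * ε := by
  induction n with
  | zero => rw [Measure.pi_of_empty, Measure.pi_of_empty]; exact le_self_add
  | succ n ih =>
    -- hybrid argument: replace `μ` by `ν` in the last `n` factors (induction), then in the first
    let e := MeasurableEquiv.piFinSuccAbove (fun _ : Fin (n + 1) => α) 0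
    have hs' : MeasurableSet (e.symm ⁻¹' s) := e.symm.measurable hs
    have hpi (ρ : Measure α) [IsProbabilityMeasure ρ] :
        Measure.pi (fun _ => ρ) s =
          ∫⁻ x, Measure.pi (fun _ => ρ) (Prod.mk x ⁻¹' (e.symm ⁻¹' s)) ∂ρ := by
      rw [← Measure.prod_apply hs',
        ((measurePreserving_piFinSuccAbove (fun _ => ρ) 0).symm e).measure_preimage
          hs.nullMeasurableSet]
    set t := e.symm ⁻¹' s
    calc Measure.pi (fun _ => μ) s
        ≤ ∫⁻ x, (Measure.pi (fun _ => ν) (Prod.mk x ⁻¹' t) + n * ε) ∂μ := by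
          rw [hpi]
          exact lintegral_mono fun x => ih (measurable_prodMk_left hs')
      _ = ∫⁻ x, Measure.pi (fun _ => ν) (Prod.mk x ⁻¹' t) ∂μ + n * ε := by
          rw [lintegral_add_right _ measurable_const, lintegral_const, measure_univ, mul_one]
      _ ≤ ∫⁻ x, Measure.pi (fun _ => ν) (Prod.mk x ⁻¹' t) ∂ν + ε + n * ε := by
          gcongr
          exact lintegral_le_add_of_forall_le_add hμν (measurable_measure_prodMk_left hs')
            fun _ => prob_le_one
      _ = Measure.pi (fun _ => ν) s + (n + 1 : ℕ) * ε := by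
          rw [hpi]
          push_cast
          ring

end MeasureTheory

theorem stmt13 {Θ 𝒜 : Type*} [MeasurableSpace 𝒜] (k : ℕ)
    (f : (h : ℕ) → (Fin k → 𝒜 → ℝ) → Measure 𝒜)
    (hfm : ∀ h, Measurable (f h)) (hfp : ∀ h ms, IsProbabilityMeasure (f h ms))
    (post : Θ → (h : ℕ) → Kernel (Traj 𝒜 h) (𝒜 → ℝ))
    (hpostM : ∀ θ h, IsMarkovKernel (post θ h))
    (alg : Θ → (h : ℕ) → Kernel (Traj 𝒜 h) 𝒜)
    (halg : ∀ θ (h : ℕ) (τ : Traj 𝒜 h),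
      (alg θ h) τ = (Measure.pi fun _ : Fin k => (post θ h) τ).bind (f h)) :
    IsMonteCarlo alg post (k : ℝ) := by
  intro θ θ' h τ
  have := hpostM
  have : ∀ θ, IsProbabilityMeasure (alg θ h τ) := fun θ =>
    halg θ h τ ▸ isProbabilityMeasure_bind (hfm h).aemeasurable (.of_forall (hfp h))
  have := hfp h
  have hdom : ∀ θ θ' s, MeasurableSet s → alg θ h τ s ≤
      alg θ' h τ s + ENNReal.ofReal (k * TV (post θ h τ) (post θ' h τ)) := by
    intro θ θ' s hs
    rw [halg, halg, ENNReal.ofReal_mul (Nat.cast_nonneg k), ENNReal.ofReal_natCast]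
    exact Measure.bind_apply_le_add
      (fun _ => Measure.pi_apply_le_add (fun _ => measure_le_add_ofReal_TV _ _) k) (hfm h) hs
  refine TV_le_of_forall_le_add _ _ (mul_nonneg k.cast_nonneg (TV_nonneg _ _))
    (hdom θ θ') ?_
  rw [TV_comm]
  exact hdom θ' θ

end
end

section
/- Tail expectation bound for sub-Gaussian priors: suppose the action set 𝒜 is finite and the prior P_θ (a distribution over mean vectors μ ∈ ℝ^𝒜) is coordinate-wise σ²-sub-Gaussian. Then for all p ∈ (0,1], Ψ_θ(p) ≤ diam(E_θ[μ]) + σ·(8 + 5·√(log(2|𝒜|/p))). -/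
/-!
Write `c = E[μ]`. Pointwise `diam μ ≤ diam c + 2 ‖μ - c‖∞ ≤ diam c + 2u + 2 (‖μ - c‖∞ - u)⁺`,
so for every test function `0 ≤ Y ≤ 1` with `E[Y] ≤ p` we get
`E[diam μ · Y] ≤ p (diam c + 2u) + 2 E[(‖μ - c‖∞ - u)⁺]`.
With `u = σ √(2 log (2|𝒜|/p))`, a union bound over the coordinates gives
`P(‖μ - c‖∞ ≥ u + nσ) ≤ p 2⁻ⁿ`, and summing these layers of width `σ` bounds
`E[(‖μ - c‖∞ - u)⁺]` by `2σp`.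
-/

open MeasureTheory ProbabilityTheory

noncomputable section

/-- The upper tail expectation of a random variable `X`:
`Ψ_X(p) = (1/p) sup { E[XY] : Y measurable, 0 ≤ Y ≤ 1, E[Y] ≤ p }` for `p ≤ 1`,
extended by `Ψ_X(p) = E[X]` for `p > 1`. -/
def tailExp {Ω : Type*} [MeasurableSpace Ω] (μ : Measure Ω) (X : Ω → ℝ) (p : ℝ) : ℝ :=
  if p ≤ 1 then
    (1 / p) *
      ⨆ Y : {Y : Ω → ℝ // Measurable Y ∧ (∀ ω, Y ω ∈ Set.Icc (0:ℝ) 1) ∧ ∫ ω, Y ω ∂μ ≤ p},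
        ∫ ω, X ω * Y.1 ω ∂μ
  else ∫ ω, X ω ∂μ

/-- The diameter of a mean vector: `sup_a μ_a - inf_a μ_a`. -/
def mdiam {𝒜 : Type*} (m : 𝒜 → ℝ) : ℝ := (⨆ a, m a) - ⨅ a, m a

section Diameter

variable {𝒜 : Type*} [Fintype 𝒜] [Nonempty 𝒜]

lemma mdiam_nonneg (c : 𝒜 → ℝ) : 0 ≤ mdiam c := by
  obtain ⟨a⟩ := ‹Nonempty 𝒜›
  have hinf := ciInf_le (Set.finite_range c).bddBelow a
  have hsup := le_ciSup (Set.finite_range c).bddAbove a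
  rw [mdiam]
  linarith

lemma mdiam_le_add_two_mul_norm_sub (m c : 𝒜 → ℝ) : mdiam m ≤ mdiam c + 2 * ‖m - c‖ := by
  have hdev (a : 𝒜) : |m a - c a| ≤ ‖m - c‖ := norm_le_pi_norm (m - c) a
  have hsup : (⨆ a, m a) ≤ (⨆ a, c a) + ‖m - c‖ := ciSup_le fun a => by
    have := le_ciSup (Set.finite_range c).bddAbove a
    linarith [le_abs_self (m a - c a), hdev a]
  have hinf : (⨅ a, c a) - ‖m - c‖ ≤ ⨅ a, m a := le_ciInf fun a => by
    have := ciInf_le (Set.finite_range c).bddBelow a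
    linarith [neg_abs_le (m a - c a), hdev a]
  rw [mdiam, mdiam]
  linarith

lemma measure_le_norm_sub_le_sum (P : Measure (𝒜 → ℝ)) (c : 𝒜 → ℝ) (t : ℝ) :
    P {m | t ≤ ‖m - c‖} ≤ ∑ a, P {m | t ≤ |m a - c a|} := by
  refine (measure_mono fun m (hm : t ≤ ‖m - c‖) => ?_).trans (measure_iUnion_fintype_le P _)
  obtain ⟨a, ha⟩ := Finite.exists_max fun a => |m a - c a|
  have : ‖m - c‖ ≤ |m a - c a| := (pi_norm_le_iff_of_nonneg (abs_nonneg _)).2 ha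
  exact Set.mem_iUnion.2 ⟨a, hm.trans this⟩

lemma measure_mul_le_norm_sub_le (P : Measure (𝒜 → ℝ)) (c : 𝒜 → ℝ) {σ : ℝ} (hσ : 0 < σ)
    (hsg : ∀ a (t : ℝ), 0 ≤ t →
      P {m | t ≤ |m a - c a|} ≤ ENNReal.ofReal (2 * Real.exp (-(t ^ 2) / (2 * σ ^ 2))))
    {s : ℝ} (hs : 0 ≤ s) :
    P {m | σ * s ≤ ‖m - c‖} ≤
      ENNReal.ofReal (Fintype.card 𝒜 * (2 * Real.exp (-(s ^ 2) / 2))) := by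
  have hexp : -((σ * s) ^ 2) / (2 * σ ^ 2) = -(s ^ 2) / 2 := by field_simp
  calc P {m | σ * s ≤ ‖m - c‖} ≤ ∑ a, P {m | σ * s ≤ |m a - c a|} :=
        measure_le_norm_sub_le_sum P c _
    _ ≤ ∑ _a : 𝒜, ENNReal.ofReal (2 * Real.exp (-(s ^ 2) / 2)) :=
        Finset.sum_le_sum fun a _ => hexp ▸ hsg a _ (by positivity)
    _ = _ := by
        rw [Finset.sum_const, Finset.card_univ, nsmul_eq_mul,
          ENNReal.ofReal_mul (Nat.cast_nonneg _), ENNReal.ofReal_natCast]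

end Diameter

section LayerCake

variable {Ω : Type*} [MeasurableSpace Ω] (μ : Measure Ω) {g : Ω → ℝ}

/-- A discrete layer-cake bound: `(g - u)⁺` is dominated by `σ` times the number of levels
`u + n σ` that `g` reaches. -/
lemma lintegral_ofReal_sub_le_tsum (hg : Measurable g) (u : ℝ) {σ : ℝ} (hσ : 0 < σ) :
    ∫⁻ ω, ENNReal.ofReal (g ω - u) ∂μ ≤
      ∑' n : ℕ, ENNReal.ofReal σ * μ {ω | u + n * σ ≤ g ω} := by
  have hmeas (n : ℕ) : MeasurableSet {ω | u + n * σ ≤ g ω} :=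
    measurableSet_le measurable_const hg
  have hpt (ω : Ω) : ENNReal.ofReal (g ω - u) ≤
      ∑' n : ℕ, {ω | u + n * σ ≤ g ω}.indicator (fun _ => ENNReal.ofReal σ) ω := by
    set N := ⌈(g ω - u) / σ⌉₊
    have hN : g ω - u ≤ N * σ := (div_le_iff₀ hσ).1 (Nat.le_ceil _)
    have hlevel (n : ℕ) (hn : n ∈ Finset.range N) : ω ∈ {ω | u + n * σ ≤ g ω} := by
      have := (lt_div_iff₀ hσ).1 (Nat.lt_ceil.1 (Finset.mem_range.1 hn))
      exact (by linarith : u + n * σ ≤ g ω)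
    calc ENNReal.ofReal (g ω - u) ≤ ENNReal.ofReal (N * σ) := ENNReal.ofReal_le_ofReal hN
      _ = ∑ n ∈ Finset.range N,
            {ω | u + n * σ ≤ g ω}.indicator (fun _ => ENNReal.ofReal σ) ω := by
          rw [Finset.sum_congr rfl fun n hn => Set.indicator_of_mem (hlevel n hn) _,
            Finset.sum_const, Finset.card_range, nsmul_eq_mul,
            ENNReal.ofReal_mul (Nat.cast_nonneg _), ENNReal.ofReal_natCast]
      _ ≤ _ := ENNReal.sum_le_tsum _
  calc ∫⁻ ω, ENNReal.ofReal (g ω - u) ∂μ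
      ≤ ∫⁻ ω, ∑' n : ℕ, {ω | u + n * σ ≤ g ω}.indicator (fun _ => ENNReal.ofReal σ) ω ∂μ :=
        lintegral_mono hpt
    _ = _ := by
        rw [lintegral_tsum fun n => (measurable_const.indicator (hmeas n)).aemeasurable]
        simp only [lintegral_indicator_const (hmeas _)]

lemma integral_max_sub_le_of_measure_le_geometric (hg : Measurable g) (u : ℝ) {σ C : ℝ}
    (hσ : 0 < σ) (hC : 0 ≤ C)
    (htail : ∀ n : ℕ, μ {ω | u + n * σ ≤ g ω} ≤ ENNReal.ofReal C * 2⁻¹ ^ n) :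
    Integrable (fun ω => max (g ω - u) 0) μ ∧ ∫ ω, max (g ω - u) 0 ∂μ ≤ 2 * σ * C := by
  have hlint : ∫⁻ ω, ENNReal.ofReal (max (g ω - u) 0) ∂μ ≤ ENNReal.ofReal (2 * σ * C) :=
    calc ∫⁻ ω, ENNReal.ofReal (max (g ω - u) 0) ∂μ
        = ∫⁻ ω, ENNReal.ofReal (g ω - u) ∂μ := by
          simp only [ENNReal.ofReal_max, ENNReal.ofReal_zero, zero_le, max_eq_left]
      _ ≤ ∑' n : ℕ, ENNReal.ofReal σ * (ENNReal.ofReal C * 2⁻¹ ^ n) :=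
          (lintegral_ofReal_sub_le_tsum μ hg u hσ).trans
            (ENNReal.tsum_le_tsum fun n => by gcongr; exact htail n)
      _ = ENNReal.ofReal (2 * σ * C) := by
          rw [ENNReal.tsum_mul_left, ENNReal.tsum_mul_left, ENNReal.tsum_geometric_two,
            ENNReal.ofReal_mul (by positivity), ENNReal.ofReal_mul (by positivity),
            ENNReal.ofReal_ofNat]
          ring
  have hnonneg : 0 ≤ᵐ[μ] fun ω => max (g ω - u) 0 := .of_forall fun ω => le_max_right _ _
  have hmeas : AEStronglyMeasurable (fun ω => max (g ω - u) 0) μ :=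
    ((hg.sub measurable_const).max measurable_const).aestronglyMeasurable
  refine ⟨⟨hmeas, (hasFiniteIntegral_iff_ofReal hnonneg).2 (hlint.trans_lt ENNReal.ofReal_lt_top)⟩,
    ?_⟩
  rw [integral_eq_lintegral_of_nonneg_ae hnonneg hmeas]
  exact ENNReal.toReal_le_of_le_ofReal (by positivity) hlint

end LayerCake

lemma Real.exp_neg_sq_add_div_two_le {r : ℝ} (hr : Real.log 2 ≤ r) (n : ℕ) :
    Real.exp (-(r + n) ^ 2 / 2) ≤ Real.exp (-(r ^ 2) / 2) * 2⁻¹ ^ n := by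
  have hpow : (2 : ℝ)⁻¹ ^ n = Real.exp (-(n * Real.log 2)) := by
    rw [Real.exp_neg, Real.exp_nat_mul, Real.exp_log two_pos, inv_pow]
  have hlog2 := Real.log_pos one_lt_two
  rw [hpow, ← Real.exp_add, Real.exp_le_exp]
  nlinarith [mul_le_mul_of_nonneg_left hr (Nat.cast_nonneg n : (0 : ℝ) ≤ n)]

lemma measure_le_norm_sub_le_geometric {𝒜 : Type*} [Fintype 𝒜] [Nonempty 𝒜]
    (P : Measure (𝒜 → ℝ)) (c : 𝒜 → ℝ) {σ : ℝ} (hσ : 0 < σ)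
    (hsg : ∀ a (t : ℝ), 0 ≤ t →
      P {m | t ≤ |m a - c a|} ≤ ENNReal.ofReal (2 * Real.exp (-(t ^ 2) / (2 * σ ^ 2))))
    {p : ℝ} (hp : 0 < p) (hp1 : p ≤ 1) (n : ℕ) :
    P {m | σ * √(2 * Real.log (2 * Fintype.card 𝒜 / p)) + n * σ ≤ ‖m - c‖} ≤
      ENNReal.ofReal p * 2⁻¹ ^ n := by
  set K : ℝ := (Fintype.card 𝒜 : ℝ)
  have hK : 1 ≤ K := Nat.one_le_cast.2 Fintype.card_pos
  set L := Real.log (2 * K / p)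
  have hL : Real.log 2 ≤ L :=
    Real.log_le_log two_pos (by rw [le_div_iff₀ hp]; nlinarith)
  have hlog2 := Real.log_pos one_lt_two
  have hr : Real.log 2 ≤ √(2 * L) :=
    (Real.le_sqrt hlog2.le (by linarith)).2 (by nlinarith [Real.log_two_lt_d9])
  have hexpL : Real.exp (-(√(2 * L) ^ 2) / 2) = p / (2 * K) := by
    rw [Real.sq_sqrt (by linarith), show -(2 * L) / 2 = -L by ring, Real.exp_neg,
      Real.exp_log (by positivity), inv_div]
  have hbound : K * (2 * Real.exp (-(√(2 * L) + n) ^ 2 / 2)) ≤ p * 2⁻¹ ^ n :=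
    calc K * (2 * Real.exp (-(√(2 * L) + n) ^ 2 / 2))
        ≤ K * (2 * (Real.exp (-(√(2 * L) ^ 2) / 2) * 2⁻¹ ^ n)) := by
          gcongr; exact Real.exp_neg_sq_add_div_two_le hr n
      _ = p * 2⁻¹ ^ n := by rw [hexpL]; field_simp
  calc P {m | σ * √(2 * L) + n * σ ≤ ‖m - c‖}
      = P {m | σ * (√(2 * L) + n) ≤ ‖m - c‖} := by rw [mul_add, mul_comm σ (n : ℝ)]
    _ ≤ ENNReal.ofReal (K * (2 * Real.exp (-(√(2 * L) + n) ^ 2 / 2))) :=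
        measure_mul_le_norm_sub_le P c hσ hsg (by positivity)
    _ ≤ ENNReal.ofReal (p * 2⁻¹ ^ n) := ENNReal.ofReal_le_ofReal hbound
    _ = ENNReal.ofReal p * 2⁻¹ ^ n := by
        rw [ENNReal.ofReal_mul hp.le, ENNReal.ofReal_pow (by norm_num),
          ENNReal.ofReal_inv_of_pos two_pos, ENNReal.ofReal_ofNat]

section TailExpectation

variable {Ω : Type*} [MeasurableSpace Ω] {μ : Measure Ω} [IsFiniteMeasure μ]

lemma tailExp_le_add_integral_div {X Z : Ω → ℝ} {a p : ℝ} (ha : 0 ≤ a) (hp : 0 < p)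
    (hp1 : p ≤ 1) (hZ : Integrable Z μ) (hZ0 : ∀ ω, 0 ≤ Z ω) (hXZ : ∀ ω, X ω ≤ a + Z ω) :
    tailExp μ X p ≤ a + (∫ ω, Z ω ∂μ) / p := by
  have hbound
      (Y : {Y : Ω → ℝ // Measurable Y ∧ (∀ ω, Y ω ∈ Set.Icc (0:ℝ) 1) ∧ ∫ ω, Y ω ∂μ ≤ p}) :
      ∫ ω, X ω * Y.1 ω ∂μ ≤ a * p + ∫ ω, Z ω ∂μ := by
    obtain ⟨Y, hYm, hY01, hYp⟩ := Y
    have hZint_nonneg : 0 ≤ ∫ ω, Z ω ∂μ := integral_nonneg hZ0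
    by_cases hXY : Integrable (fun ω => X ω * Y ω) μ
    swap
    · rw [integral_undef hXY]; positivity
    have hY : Integrable Y μ := .mono' (integrable_const 1) hYm.aestronglyMeasurable
      (.of_forall fun ω => by
        rw [Real.norm_eq_abs, abs_of_nonneg (hY01 ω).1]; exact (hY01 ω).2)
    calc ∫ ω, X ω * Y ω ∂μ ≤ ∫ ω, (a * Y ω + Z ω) ∂μ :=
          integral_mono hXY ((hY.const_mul a).add hZ) fun ω => by
            nlinarith [mul_le_mul_of_nonneg_right (hXZ ω) (hY01 ω).1, hZ0 ω, (hY01 ω).2]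
      _ = a * ∫ ω, Y ω ∂μ + ∫ ω, Z ω ∂μ := by
          rw [integral_add (hY.const_mul a) hZ, integral_const_mul]
      _ ≤ a * p + ∫ ω, Z ω ∂μ := by gcongr
  have : Nonempty {Y : Ω → ℝ // Measurable Y ∧ (∀ ω, Y ω ∈ Set.Icc (0:ℝ) 1) ∧ ∫ ω, Y ω ∂μ ≤ p} :=
    ⟨⟨0, measurable_const, fun _ => ⟨le_rfl, zero_le_one⟩, by simp [hp.le]⟩⟩
  rw [tailExp, if_pos hp1]
  calc _ ≤ 1 / p * (a * p + ∫ ω, Z ω ∂μ) := by gcongr; exact ciSup_le hbound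
    _ = a + (∫ ω, Z ω ∂μ) / p := by field_simp

end TailExpectation

theorem stmt18 {𝒜 : Type*} [Fintype 𝒜] [Nonempty 𝒜]
    (P : Measure (𝒜 → ℝ)) [IsProbabilityMeasure P]
    (σ : ℝ) (hσ : 0 < σ)
    (hsg : ∀ a (t : ℝ), 0 ≤ t →
      P {m | t ≤ |m a - ∫ m', m' a ∂P|} ≤
        ENNReal.ofReal (2 * Real.exp (-(t ^ 2) / (2 * σ ^ 2)))) :
    ∀ p : ℝ, 0 < p → p ≤ 1 →
      tailExp P mdiam p ≤
        mdiam (fun a => ∫ m, m a ∂P) +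
          σ * (8 + 5 * Real.sqrt (Real.log (2 * (Fintype.card 𝒜 : ℝ) / p))) := by
  intro p hp hp1
  set c : 𝒜 → ℝ := fun a => ∫ m, m a ∂P
  set L := Real.log (2 * (Fintype.card 𝒜 : ℝ) / p)
  set u := σ * √(2 * L)
  have hu0 : 0 ≤ u := mul_nonneg hσ.le (Real.sqrt_nonneg _)
  obtain ⟨hint, hint_le⟩ := integral_max_sub_le_of_measure_le_geometric P
    (g := fun m => ‖m - c‖) (measurable_id.sub measurable_const).norm u hσ hp.le
    (measure_le_norm_sub_le_geometric P c hσ hsg hp hp1)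
  have hu : 2 * u ≤ 4 * σ * √L := by
    have hsqrt2 : √2 ≤ 2 := by nlinarith [Real.sq_sqrt zero_le_two, Real.sqrt_nonneg 2]
    rw [show u = σ * (√2 * √L) from congrArg (σ * ·) (Real.sqrt_mul zero_le_two L)]
    nlinarith [mul_le_mul_of_nonneg_right hsqrt2 (mul_nonneg hσ.le (Real.sqrt_nonneg L))]
  have herror : (∫ m, 2 * max (‖m - c‖ - u) 0 ∂P) / p ≤ 4 * σ := by
    rw [integral_const_mul, div_le_iff₀ hp]
    linarith
  calc tailExp P mdiam p
      ≤ (mdiam c + 2 * u) + (∫ m, 2 * max (‖m - c‖ - u) 0 ∂P) / p :=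
        tailExp_le_add_integral_div (by linarith [mdiam_nonneg c]) hp hp1 (hint.const_mul 2)
          (fun m => by positivity) fun m => by
            linarith [mdiam_le_add_two_mul_norm_sub m c, le_max_left (‖m - c‖ - u) 0]
    _ ≤ mdiam c + σ * (8 + 5 * √L) := by nlinarith [Real.sqrt_nonneg L]

end
end
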